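/- arXiv:2403.13549 — 6 statements merged into one kernel-verified Lean document; each statement's English description precedes it below -/
import Mathlib

section
/- Let φ : ℝ → ℂ be a C^∞ function with compact support. For t ∈ ℝ define F(t) = lim_{ε→0⁺} ∫_ℝ φ(x) e^{ixt}/(x − iε) dx. Then this limit exists for every t ≥ 0, and there is a constant C such that |F(t) − 2πi φ(0)| ≤ C (1 + t)^{−2} for all t ≥ 0. -/
open MeasureTheory Filter Set

section PlemeljAux
open Complex FourierTransform

lemma plemelj_cexp_integral_Ioi {c : ℂ} (hc : 0 < c.re) :
    ∫ s : ℝ in Ioi (0:ℝ), Complex.exp (-(c * s)) = 1 / c := by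
  have hc0 : c ≠ 0 := by intro h; simp [h] at hc
  have hint : IntegrableOn (fun s : ℝ => Complex.exp (-(c * s))) (Ioi (0:ℝ)) := by
    apply Integrable.mono' (g := fun s : ℝ => Real.exp (-c.re * s))
    · exact exp_neg_integrableOn_Ioi 0 hc
    · exact (Complex.continuous_exp.comp (by continuity)).aestronglyMeasurable
    · filter_upwards with s
      simp [Complex.norm_exp, neg_mul]
  have key := integral_Ioi_of_hasDerivAt_of_tendsto'
    (f := fun s : ℝ => -Complex.exp (-(c * s)) / c)
    (f' := fun s : ℝ => Complex.exp (-(c * s))) (a := 0) (m := 0)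
    ?_ hint ?_
  · rw [key]; field_simp; simp
  · intro x _
    have h1 : HasDerivAt (fun s : ℝ => -(c * s)) (-c) x := by
      have h1' := ((hasDerivAt_id x).ofReal_comp.const_mul c).neg
      simp at h1'
      exact h1'
    have := (h1.cexp).neg.div_const c
    refine this.congr_deriv ?_
    simp [hc0]
  · rw [show (0:ℂ) = -0/c by simp]
    apply Tendsto.div_const
    apply Tendsto.neg
    have : Tendsto (fun s : ℝ => Real.exp (-c.re * s)) atTop (nhds 0) := by
      simpa using Real.tendsto_exp_comp_nhds_zero.2
        ((tendsto_id (α := ℝ)).const_mul_atTop_of_neg (by linarith : -c.re < 0))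
    apply squeeze_zero_norm _ this
    intro s
    simp [Complex.norm_exp, neg_mul]

noncomputable def plemeljSchwartz (φ : ℝ → ℂ) (hφ : ContDiff ℝ (⊤ : ℕ∞) φ)
    (hsupp : HasCompactSupport φ) : SchwartzMap ℝ ℂ where
  toFun := φ
  smooth' := hφ.of_le (by simp)
  decay' := by
    intro k n
    have hc : Continuous fun x : ℝ => ‖x‖ ^ k * ‖iteratedFDeriv ℝ n φ x‖ :=
      (continuous_norm.pow k).mul (hφ.continuous_iteratedFDeriv (by exact_mod_cast le_top)).norm
    have hs : HasCompactSupport fun x : ℝ => ‖x‖ ^ k * ‖iteratedFDeriv ℝ n φ x‖ :=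
      ((hsupp.iteratedFDeriv n).norm).mul_left
    obtain ⟨C, hC⟩ := hc.bounded_above_of_compact_support hs
    refine ⟨C, fun x => ?_⟩
    have := hC x
    rw [Real.norm_eq_abs] at this
    exact (le_abs_self _).trans this

@[simp] lemma plemeljSchwartz_apply (φ : ℝ → ℂ) (hφ : ContDiff ℝ (⊤ : ℕ∞) φ)
    (hsupp : HasCompactSupport φ) : ⇑(plemeljSchwartz φ hφ hsupp) = φ := rfl

end PlemeljAux

set_option maxHeartbeats 1000000 in
/-- For a `C^∞` compactly supported `φ : ℝ → ℂ`, the limit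
`F(t) = lim_{ε→0⁺} ∫_ℝ φ(x) e^{ixt}/(x − iε) dx` exists for every `t ≥ 0`, and
`|F(t) − 2πi φ(0)| ≤ C (1+t)⁻²` for all `t ≥ 0`. -/
theorem plemelj_oscillatory (φ : ℝ → ℂ) (hφ : ContDiff ℝ (⊤ : ℕ∞) φ)
    (hsupp : HasCompactSupport φ) :
    ∃ (F : ℝ → ℂ) (C : ℝ),
      (∀ t : ℝ, 0 ≤ t →
        Tendsto
          (fun ε : ℝ =>
            ∫ x : ℝ, φ x * Complex.exp (Complex.I * x * t) / ((x : ℂ) - (ε : ℂ) * Complex.I))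
          (nhdsWithin 0 (Ioi 0)) (nhds (F t))) ∧
      (∀ t : ℝ, 0 ≤ t →
        ‖F t - 2 * Real.pi * Complex.I * φ 0‖ ≤ C * ((1 + t) ^ 2)⁻¹) := by
  classical
  open Complex FourierTransform in
  -- the Schwartz representative of φ and its Fourier transform
  set g : SchwartzMap ℝ ℂ := plemeljSchwartz φ hφ hsupp with hg
  set ψ : SchwartzMap ℝ ℂ := SchwartzMap.fourierTransformCLM ℂ g with hψdef
  have hπpos : (0:ℝ) < 2 * Real.pi := by positivity
  have hπne : (-(2 * Real.pi))⁻¹ ≠ (0:ℝ) := inv_ne_zero (neg_ne_zero.2 (by positivity))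
  set h : ℝ → ℂ := fun u => ψ ((-(2 * Real.pi))⁻¹ * u) with hh
  have hφcont : Continuous φ := hφ.continuous
  have hφint : Integrable φ := hφcont.integrable_of_hasCompactSupport hsupp
  -- h u = ∫ x, φ x e^{ixu}
  have h_eq : ∀ u : ℝ, h u = ∫ x : ℝ, φ x * Complex.exp (Complex.I * x * u) := by
    intro u
    have : h u = 𝓕 φ (-u / (2 * Real.pi)) := by
      have huv : (-(2 * Real.pi))⁻¹ * u = -u / (2 * Real.pi) := by field_simp
      show ψ ((-(2 * Real.pi))⁻¹ * u) = _
      rw [huv, hψdef]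
      simp only [SchwartzMap.fourierTransformCLM_apply, SchwartzMap.fourier_coe, plemeljSchwartz_apply, hg]
    rw [this, Real.fourier_eq']
    congr 1
    ext x
    rw [smul_eq_mul, mul_comm]
    congr 1
    simp only [RCLike.inner_apply, conj_trivial]
    have hπ : (Real.pi : ℝ) ≠ 0 := Real.pi_ne_zero
    rw [show -2 * Real.pi * (-u / (2 * Real.pi) * x) = x * u by field_simp]
    push_cast
    ring_nf
  have h_cont : Continuous h := ψ.continuous.comp (continuous_const.mul continuous_id)
  have h_int : Integrable h :=
    (integrable_comp_mul_left_iff (⇑ψ) hπne).2 ψ.integrable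
  -- decay of h
  obtain ⟨C0, hC0pos, hC0⟩ := ψ.decay 0 0
  obtain ⟨C3, hC3pos, hC3⟩ := ψ.decay 3 0
  set B : ℝ := 4 * (2 * Real.pi) ^ 3 * (C0 + C3) with hB
  have hBpos : 0 < B := by positivity
  have h_decay : ∀ u : ℝ, ‖h u‖ ≤ B * ((1 + |u|) ^ 3)⁻¹ := by
    intro u
    set v : ℝ := (-(2 * Real.pi))⁻¹ * u with hv
    have huv : |u| = 2 * Real.pi * |v| := by
      rw [hv, abs_mul, abs_inv, abs_neg, abs_of_pos hπpos]
      field_simp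
    have hψ0 : ‖ψ v‖ ≤ C0 := by
      have := hC0 v; simpa [norm_iteratedFDeriv_zero] using this
    have hψ3 : |v| ^ 3 * ‖ψ v‖ ≤ C3 := by
      have := hC3 v; simpa [norm_iteratedFDeriv_zero, Real.norm_eq_abs] using this
    have hkey : (1 + |u|) ^ 3 * ‖h u‖ ≤ B := by
      have h1 : (1 + |u|) ^ 3 ≤ (2 * Real.pi) ^ 3 * (1 + |v|) ^ 3 := by
        rw [← mul_pow]
        apply pow_le_pow_left₀ (by positivity)
        have : (1:ℝ) ≤ 2 * Real.pi := by nlinarith [Real.pi_gt_three]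
        rw [huv]; nlinarith [abs_nonneg v]
      have h2 : (1 + |v|) ^ 3 ≤ 4 * (1 + |v| ^ 3) := by
        nlinarith [abs_nonneg v, sq_nonneg (1 - |v|), sq_nonneg (|v| - 1)]
      have hnorm : ‖h u‖ = ‖ψ v‖ := rfl
      have h3 : (1 + |v| ^ 3) * ‖ψ v‖ ≤ C0 + C3 := by
        have := norm_nonneg (ψ v); nlinarith
      calc (1 + |u|) ^ 3 * ‖h u‖ ≤ (2 * Real.pi) ^ 3 * (1 + |v|) ^ 3 * ‖ψ v‖ := by
            rw [hnorm]; exact mul_le_mul_of_nonneg_right h1 (norm_nonneg _)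
        _ ≤ (2 * Real.pi) ^ 3 * (4 * (1 + |v| ^ 3)) * ‖ψ v‖ := by
            apply mul_le_mul_of_nonneg_right _ (norm_nonneg _)
            apply mul_le_mul_of_nonneg_left h2 (by positivity)
        _ = 4 * (2 * Real.pi) ^ 3 * ((1 + |v| ^ 3) * ‖ψ v‖) := by ring
        _ ≤ 4 * (2 * Real.pi) ^ 3 * (C0 + C3) := by
            apply mul_le_mul_of_nonneg_left h3 (by positivity)
        _ = B := rfl
    have hpos : (0:ℝ) < (1 + |u|) ^ 3 := by positivity
    rw [mul_comm] at hkey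
    calc ‖h u‖ ≤ B / ((1 + |u|) ^ 3) := (le_div_iff₀ hpos).2 hkey
      _ = B * ((1 + |u|) ^ 3)⁻¹ := div_eq_mul_inv _ _
  -- Fubini identity
  have key : ∀ t : ℝ, ∀ ε : ℝ, 0 < ε →
      (∫ x : ℝ, φ x * Complex.exp (Complex.I * x * t) / ((x : ℂ) - (ε : ℂ) * Complex.I))
        = Complex.I * ∫ s in Ioi (0:ℝ), Complex.exp (-((ε:ℂ) * s)) * h (t - s) := by
    intro t ε hε
    set f : ℝ × ℝ → ℂ := fun p =>
      φ p.1 * Complex.exp (Complex.I * p.1 * t) * Complex.I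
        * Complex.exp (-(((ε : ℂ) + Complex.I * p.1) * p.2)) with hfdef
    have hre : ∀ x : ℝ, 0 < ((ε : ℂ) + Complex.I * x).re := by
      intro x; simpa using hε
    have hfcont : Continuous f := by
      apply Continuous.mul
      · apply Continuous.mul
        · exact (hφcont.comp continuous_fst).mul
            (Complex.continuous_exp.comp (by continuity))
        · exact continuous_const
      · exact Complex.continuous_exp.comp (by continuity)
    have hfint : Integrable f
        ((volume : Measure ℝ).prod ((volume : Measure ℝ).restrict (Ioi 0))) := by
      have h1 : Integrable (fun z : ℝ × ℝ => ‖φ z.1‖ * Real.exp (-(ε * z.2)))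
          ((volume : Measure ℝ).prod ((volume : Measure ℝ).restrict (Ioi 0))) := by
        exact Integrable.mul_prod (f := fun x : ℝ => ‖φ x‖)
          (g := fun s : ℝ => Real.exp (-(ε * s))) hφint.norm
          (by have := exp_neg_integrableOn_Ioi 0 hε; simp only [neg_mul] at this; exact this)
      apply h1.mono' hfcont.aestronglyMeasurable
      filter_upwards with z
      rw [hfdef]
      simp only [norm_mul, Complex.norm_exp, Complex.norm_I]
      have e1 : (Complex.I * ↑z.1 * ↑t).re = 0 := by simp
      have e2 : (-(((ε : ℂ) + Complex.I * z.1) * z.2)).re = -(ε * z.2) := by simp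
      rw [e1, e2, Real.exp_zero]
      simp [abs_mul, mul_comm, mul_assoc, mul_left_comm, Complex.norm_def]
    have lhs_eq : ∀ x : ℝ, φ x * Complex.exp (Complex.I * x * t) / ((x : ℂ) - ε * Complex.I)
        = ∫ s in Ioi (0:ℝ), f (x, s) := by
      intro x
      have : (∫ s in Ioi (0:ℝ), f (x, s))
          = (φ x * Complex.exp (Complex.I * x * t) * Complex.I)
            * ∫ s in Ioi (0:ℝ), Complex.exp (-(((ε : ℂ) + Complex.I * x) * s)) := by
        rw [← integral_const_mul]
      rw [this, plemelj_cexp_integral_Ioi (hre x)]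
      have hz : ((x:ℂ) - ε * Complex.I) ≠ 0 := by
        intro hzz
        have : ((x:ℂ) - ε * Complex.I).im = 0 := by rw [hzz]; simp
        simp at this
        linarith
      have hz2 : ((ε:ℂ) + Complex.I * x) ≠ 0 := by
        intro hzz
        have : ((ε:ℂ) + Complex.I * x).re = 0 := by rw [hzz]; simp
        simp at this
        linarith
      have hI : ((ε:ℂ) + Complex.I * x) = Complex.I * ((x:ℂ) - ε * Complex.I) := by
        linear_combination (ε:ℂ) * Complex.I_sq
      rw [hI]
      field_simp
    have inner : ∀ s : ℝ, (∫ x : ℝ, f (x, s))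
        = Complex.I * (Complex.exp (-((ε:ℂ) * s)) * h (t - s)) := by
      intro s
      rw [h_eq (t - s), ← integral_const_mul, ← integral_const_mul]
      congr 1
      ext x
      rw [hfdef]
      have expeq : Complex.exp (Complex.I * x * t)
            * Complex.exp (-(((ε : ℂ) + Complex.I * x) * s))
          = Complex.exp (-((ε:ℂ) * s)) * Complex.exp (Complex.I * x * (t - s)) := by
        rw [← Complex.exp_add, ← Complex.exp_add]
        congr 1
        push_cast
        ring
      calc φ x * Complex.exp (Complex.I * x * t) * Complex.I
            * Complex.exp (-(((ε : ℂ) + Complex.I * x) * s))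
          = φ x * Complex.I * (Complex.exp (Complex.I * x * t)
              * Complex.exp (-(((ε : ℂ) + Complex.I * x) * s))) := by ring
        _ = φ x * Complex.I * (Complex.exp (-((ε:ℂ) * s))
              * Complex.exp (Complex.I * x * (t - s))) := by rw [expeq]
        _ = Complex.I * (Complex.exp (-((ε:ℂ) * s))
              * (φ x * Complex.exp (Complex.I * x * ((t:ℝ) - (s:ℝ) : ℝ)))) := by push_cast; ring
    calc (∫ x : ℝ, φ x * Complex.exp (Complex.I * x * t) / ((x : ℂ) - (ε : ℂ) * Complex.I))
        = ∫ x : ℝ, ∫ s in Ioi (0:ℝ), f (x, s) :=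
          integral_congr_ae (Eventually.of_forall lhs_eq)
      _ = ∫ s in Ioi (0:ℝ), ∫ x : ℝ, f (x, s) := integral_integral_swap hfint
      _ = ∫ s in Ioi (0:ℝ), Complex.I * (Complex.exp (-((ε:ℂ) * s)) * h (t - s)) :=
          integral_congr_ae (Eventually.of_forall inner)
      _ = Complex.I * ∫ s in Ioi (0:ℝ), Complex.exp (-((ε:ℂ) * s)) * h (t - s) :=
          integral_const_mul _ _
  refine ⟨fun t => Complex.I * ∫ s in Ioi (0:ℝ), h (t - s), B / 2, fun t _ => ?_, fun t ht => ?_⟩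
  · -- the limit
    have hcomp : Integrable (fun s : ℝ => h (t - s)) := h_int.comp_sub_left t
    have main : Tendsto (fun ε : ℝ => ∫ s in Ioi (0:ℝ), Complex.exp (-((ε:ℂ) * s)) * h (t - s))
        (nhdsWithin 0 (Ioi 0)) (nhds (∫ s in Ioi (0:ℝ), h (t - s))) := by
      apply tendsto_integral_filter_of_dominated_convergence (fun s => ‖h (t - s)‖)
      · filter_upwards with ε
        exact ((Complex.continuous_exp.comp (by continuity)).mul
          (h_cont.comp (by continuity))).aestronglyMeasurable
      · filter_upwards [self_mem_nhdsWithin] with ε (hε : ε ∈ Ioi (0:ℝ))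
        rw [ae_restrict_iff' measurableSet_Ioi]
        filter_upwards with s hs
        rw [norm_mul]
        have h1 : ‖Complex.exp (-((ε:ℂ) * s))‖ ≤ 1 := by
          rw [Complex.norm_exp]
          have : (-((ε:ℂ) * s)).re = -(ε * s) := by simp
          rw [this]
          exact Real.exp_le_one_iff.2 (by nlinarith [mem_Ioi.1 hε, mem_Ioi.1 hs])
        calc ‖Complex.exp (-((ε:ℂ) * s))‖ * ‖h (t - s)‖ ≤ 1 * ‖h (t - s)‖ :=
              mul_le_mul_of_nonneg_right h1 (norm_nonneg _)
          _ = ‖h (t - s)‖ := one_mul _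
      · exact hcomp.norm.restrict
      · filter_upwards with s
        have hcont : Continuous fun ε : ℝ => Complex.exp (-((ε:ℂ) * s)) * h (t - s) :=
          (Complex.continuous_exp.comp (by continuity)).mul continuous_const
        have h0 := (hcont.tendsto 0).mono_left
          (nhdsWithin_le_nhds (a := (0:ℝ)) (s := Ioi (0:ℝ)))
        simpa using h0
    apply Tendsto.congr' _ (main.const_mul Complex.I)
    filter_upwards [self_mem_nhdsWithin] with ε (hε : ε ∈ Ioi (0:ℝ))
    exact (key t ε (mem_Ioi.1 hε)).symm
  · -- the bound
    have hcomp : Integrable (fun s : ℝ => h (t - s)) := h_int.comp_sub_left t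
    have htot : (∫ s in Iic (0:ℝ), h (t - s)) + (∫ s in Ioi (0:ℝ), h (t - s))
        = ∫ s : ℝ, h (t - s) :=
      intervalIntegral.integral_Iic_add_Ioi hcomp.integrableOn hcomp.integrableOn
    have hshift : (∫ s : ℝ, h (t - s)) = ∫ u : ℝ, h u := integral_sub_left_eq_self h volume t
    -- total integral of h is 2π φ 0
    have hFT : ⇑ψ = 𝓕 φ := by
      rw [hψdef]
      simp only [SchwartzMap.fourierTransformCLM_apply, SchwartzMap.fourier_coe, plemeljSchwartz_apply, hg]
    have hFTint : Integrable (𝓕 φ) := hFT ▸ ψ.integrable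
    have hinvFT : (∫ v : ℝ, 𝓕 φ v) = φ 0 := by
      have hinv := Continuous.fourierInv_fourier_eq hφcont hφint hFTint
      have h0 := congrFun hinv 0
      rw [Real.fourierInv_eq] at h0
      simpa using h0
    have hint_h : (∫ u : ℝ, h u) = ((2 * Real.pi : ℝ) : ℂ) * φ 0 := by
      have hcm := MeasureTheory.Measure.integral_comp_mul_left (⇑ψ) ((-(2 * Real.pi))⁻¹)
      have : (∫ u : ℝ, h u) = |((-(2 * Real.pi))⁻¹)⁻¹| • ∫ v : ℝ, ψ v := hcm
      rw [this, inv_inv, abs_neg, abs_of_pos hπpos, hFT, hinvFT, Complex.real_smul]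
    -- rewrite F t − 2πiφ(0)
    have hFdiff : Complex.I * (∫ s in Ioi (0:ℝ), h (t - s)) - 2 * Real.pi * Complex.I * φ 0
        = -(Complex.I * ∫ s in Iic (0:ℝ), h (t - s)) := by
      have h1 : (∫ s in Ioi (0:ℝ), h (t - s))
          = ((2 * Real.pi : ℝ) : ℂ) * φ 0 - ∫ s in Iic (0:ℝ), h (t - s) := by
        rw [← hint_h, ← hshift, ← htot]; ring
      rw [h1]
      push_cast
      ring
    -- transform the Iic-integral to an Ioi-integral
    have hIic : (∫ s in Iic (0:ℝ), h (t - s)) = ∫ y in Ioi (0:ℝ), h (t + y) := by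
      have h2 := integral_comp_neg_Iic (0:ℝ) (fun y : ℝ => h (t + y))
      simp only [neg_zero] at h2
      rw [← h2]
      apply integral_congr_ae
      filter_upwards with s
      rw [sub_eq_add_neg]
    -- derivative facts for the comparison integral
    have hderiv : ∀ y ∈ Ici (0:ℝ),
        HasDerivAt (fun y : ℝ => -(2 * (1 + t + y) ^ 2)⁻¹) (((1 + t + y) ^ 3)⁻¹) y := by
      intro y hy
      have hpos : (0:ℝ) < 1 + t + y := by
        have := mem_Ici.1 hy; linarith
      have hw : HasDerivAt (fun y : ℝ => 1 + t + y) 1 y := by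
        simpa using (hasDerivAt_id y).const_add (1 + t)
      have hw2 := (hw.pow 2).const_mul (2:ℝ)
      have hne : 2 * (1 + t + y) ^ 2 ≠ 0 := by positivity
      have := (hw2.inv hne).neg
      refine this.congr_deriv ?_
      have hne' : (1 + t + y) ≠ 0 := hpos.ne'
      simp only [Pi.pow_apply]
      field_simp
      ring
    have htends : Tendsto (fun y : ℝ => -(2 * (1 + t + y) ^ 2)⁻¹) atTop (nhds 0) := by
      rw [show (0:ℝ) = -0 by norm_num]
      apply Tendsto.neg
      apply Tendsto.inv_tendsto_atTop
      apply Tendsto.const_mul_atTop (by norm_num : (0:ℝ) < 2)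
      exact (tendsto_pow_atTop (by norm_num : 2 ≠ 0)).comp
        (tendsto_atTop_add_const_left _ _ tendsto_id)
    have hqint : IntegrableOn (fun y : ℝ => ((1 + t + y) ^ 3)⁻¹) (Ioi (0:ℝ)) :=
      integrableOn_Ioi_deriv_of_nonneg' hderiv (fun y hy => by
        have := mem_Ioi.1 hy; positivity) htends
    have hqval : (∫ y in Ioi (0:ℝ), ((1 + t + y) ^ 3)⁻¹) = (2 * (1 + t) ^ 2)⁻¹ := by
      rw [integral_Ioi_of_hasDerivAt_of_tendsto' hderiv hqint htends]
      norm_num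
    -- the pointwise bound on Ioi 0
    have hbd : ∀ᵐ y ∂(volume.restrict (Ioi (0:ℝ))),
        ‖h (t + y)‖ ≤ B * ((1 + t + y) ^ 3)⁻¹ := by
      rw [ae_restrict_iff' measurableSet_Ioi]
      filter_upwards with y hy
      have hy0 : (0:ℝ) ≤ y := (mem_Ioi.1 hy).le
      have := h_decay (t + y)
      rwa [_root_.abs_of_nonneg (by linarith : (0:ℝ) ≤ t + y), ← add_assoc] at this
    have hnorm_le : ‖∫ y in Ioi (0:ℝ), h (t + y)‖ ≤ B * (2 * (1 + t) ^ 2)⁻¹ := by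
      calc ‖∫ y in Ioi (0:ℝ), h (t + y)‖ ≤ ∫ y in Ioi (0:ℝ), B * ((1 + t + y) ^ 3)⁻¹ :=
            norm_integral_le_of_norm_le (hqint.const_mul B) hbd
        _ = B * ∫ y in Ioi (0:ℝ), ((1 + t + y) ^ 3)⁻¹ := integral_const_mul _ _
        _ = B * (2 * (1 + t) ^ 2)⁻¹ := by rw [hqval]
    have hfinal : ‖Complex.I * (∫ s in Ioi (0:ℝ), h (t - s))
        - 2 * Real.pi * Complex.I * φ 0‖ ≤ B / 2 * ((1 + t) ^ 2)⁻¹ := by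
      rw [hFdiff, hIic, norm_neg, norm_mul, Complex.norm_I, one_mul]
      calc ‖∫ y in Ioi (0:ℝ), h (t + y)‖ ≤ B * (2 * (1 + t) ^ 2)⁻¹ := hnorm_le
        _ = B / 2 * ((1 + t) ^ 2)⁻¹ := by rw [mul_inv]; ring
    exact hfinal
end

section
/- Let φ : ℝ → ℂ be a C^∞ function with compact support. Then lim_{ε→0⁺} ∫_ℝ (ε/(x² + ε²)) φ(x) dx = π φ(0). -/
open MeasureTheory Filter Set

/-- For a `C^∞` compactly supported `φ : ℝ → ℂ`,
`lim_{ε→0⁺} ∫_ℝ (ε/(x² + ε²)) φ(x) dx = π φ(0)`. -/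
theorem poisson_kernel_limit (φ : ℝ → ℂ) (hφ : ContDiff ℝ (⊤ : ℕ∞) φ)
    (hsupp : HasCompactSupport φ) :
    Tendsto (fun ε : ℝ => ∫ x : ℝ, ((ε / (x ^ 2 + ε ^ 2) : ℝ) : ℂ) * φ x)
      (nhdsWithin 0 (Ioi 0)) (nhds ((Real.pi : ℂ) * φ 0)) := by
  have hcont : Continuous φ := hφ.continuous
  obtain ⟨C, hC⟩ := hsupp.exists_bound_of_continuous hcont
  -- Step 1: change of variables x = ε y
  have key : ∀ ε : ℝ, 0 < ε →
      (∫ x : ℝ, ((ε / (x ^ 2 + ε ^ 2) : ℝ) : ℂ) * φ x)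
      = ∫ y : ℝ, (((1 + y ^ 2)⁻¹ : ℝ) : ℂ) * φ (ε * y) := by
    intro ε hε
    have h := MeasureTheory.Measure.integral_comp_mul_left
      (fun x : ℝ => ((ε / (x ^ 2 + ε ^ 2) : ℝ) : ℂ) * φ x) ε
    have habs : |ε⁻¹| = ε⁻¹ := abs_of_pos (inv_pos.2 hε)
    rw [habs] at h
    have h2 : (∫ x : ℝ, ((ε / (x ^ 2 + ε ^ 2) : ℝ) : ℂ) * φ x)
        = ε • ∫ x : ℝ, ((ε / ((ε * x) ^ 2 + ε ^ 2) : ℝ) : ℂ) * φ (ε * x) := by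
      rw [h, smul_smul, mul_inv_cancel₀ hε.ne', one_smul]
    rw [h2, ← integral_smul]
    congr 1
    ext y
    have hεy : (ε * y) ^ 2 + ε ^ 2 = ε ^ 2 * (1 + y ^ 2) := by ring
    have hpos : (0:ℝ) < 1 + y ^ 2 := by positivity
    rw [hεy]
    have : (ε / (ε ^ 2 * (1 + y ^ 2)) : ℝ) = ε⁻¹ * (1 + y ^ 2)⁻¹ := by
      field_simp
    rw [this]
    have hεc : (ε : ℂ) ≠ 0 := Complex.ofReal_ne_zero.2 hε.ne'
    push_cast
    rw [Complex.real_smul, ← mul_assoc, ← mul_assoc, mul_inv_cancel₀ hεc, one_mul]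
  -- Step 2: dominated convergence
  have hlim : Tendsto (fun ε : ℝ => ∫ y : ℝ, (((1 + y ^ 2)⁻¹ : ℝ) : ℂ) * φ (ε * y))
      (nhdsWithin 0 (Ioi 0)) (nhds ((Real.pi : ℂ) * φ 0)) := by
    have h0 : ((Real.pi : ℂ) * φ 0) = ∫ y : ℝ, (((1 + y ^ 2)⁻¹ : ℝ) : ℂ) * φ (0 * y) := by
      simp only [zero_mul]
      rw [← integral_univ_inv_one_add_sq]
      rw [show (fun y : ℝ => (((1 + y ^ 2)⁻¹ : ℝ) : ℂ) * φ 0)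
          = fun y : ℝ => ((1 + y ^ 2)⁻¹ : ℝ) • φ 0 by
        ext y; rw [Complex.real_smul]]
      rw [integral_smul_const, Complex.real_smul]
    rw [h0]
    apply tendsto_integral_filter_of_dominated_convergence
      (fun y : ℝ => (1 + y ^ 2)⁻¹ * C)
    · filter_upwards with ε
      have c1 : Continuous fun y : ℝ => (((1 + y ^ 2)⁻¹ : ℝ) : ℂ) :=
        Complex.continuous_ofReal.comp
          ((continuous_const.add (continuous_pow 2)).inv₀ (fun y => (by positivity : (0:ℝ) < 1 + y ^ 2).ne'))
      exact (c1.mul (hcont.comp (continuous_const.mul continuous_id))).aestronglyMeasurable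
    · filter_upwards with ε
      filter_upwards with y
      rw [norm_mul]
      have h1 : ‖(((1 + y ^ 2)⁻¹ : ℝ) : ℂ)‖ = (1 + y ^ 2)⁻¹ := by
        rw [Complex.norm_real, Real.norm_eq_abs, abs_of_pos (by positivity)]
      rw [h1]
      exact mul_le_mul_of_nonneg_left (hC _) (by positivity)
    · exact integrable_inv_one_add_sq.mul_const C
    · filter_upwards with y
      have : Tendsto (fun ε : ℝ => ε * y) (nhdsWithin 0 (Ioi 0)) (nhds (0 * y)) :=
        (tendsto_id.mul_const y).mono_left nhdsWithin_le_nhds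
      exact tendsto_const_nhds.mul ((hcont.tendsto _).comp this)
  refine hlim.congr' ?_
  filter_upwards [self_mem_nhdsWithin] with ε hε
  exact (key ε hε).symm
end

section
/- For every t > 0 and ε > 0, the symmetric improper integral of x e^{ixt}/(x² + ε²) over ℝ satisfies lim_{R→+∞} ∫_{−R}^{R} x e^{ixt}/(x² + ε²) dx = iπ e^{−εt}. -/
/-!
Write `x e^{ixt} / (x² + ε²) = G x + iε e^{-εt} / (x² + ε²)` with
`G z = (z e^{izt} - iε e^{-εt}) / (z² + ε²)`. The singularity of `G` at `iε` is removable, so `G` is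
holomorphic on the closed upper half-plane, where `‖G z‖ = O(e^{-t Im z} / ‖z‖ + 1 / ‖z‖²)`.
By Cauchy's theorem on `[-R, R] × [0, R]`, the integral of `G` over `[-R, R]` equals the integral
over the three other edges, which tends to `0`: the top edge is `O(e^{-tR} + 1/R)`, and the
vertical edges are `O(1/R)` because `∫₀^R e^{-ty} dy ≤ 1/t`. The second term integrates to
`2i e^{-εt} arctan (R/ε) → iπ e^{-εt}`.
-/

open MeasureTheory Filter Set intervalIntegral Complex Topology
open scoped Interval

theorem integral_exp_neg_mul_le_inv {t : ℝ} (ht : 0 < t) (R : ℝ) :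
    ∫ y in 0..R, Real.exp (-(t * y)) ≤ t⁻¹ := by
  rw [intervalIntegral.integral_comp_mul_left (fun y => Real.exp (-y)) ht.ne',
    intervalIntegral.integral_comp_neg, integral_exp, mul_zero, neg_zero, Real.exp_zero,
    smul_eq_mul]
  have := Real.exp_pos (-(t * R))
  rw [mul_le_iff_le_one_right (inv_pos.mpr ht)]
  linarith

theorem tendsto_integral_poisson_kernel {ε : ℝ} (hε : 0 < ε) :
    Tendsto (fun R : ℝ => ∫ x in -R..R, ε / (x ^ 2 + ε ^ 2)) atTop (𝓝 Real.pi) := by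
  have hderiv : ∀ x : ℝ, HasDerivAt (fun x => Real.arctan (x / ε)) (ε / (x ^ 2 + ε ^ 2)) x := by
    intro x
    refine (((hasDerivAt_id' x).div_const ε).arctan).congr_deriv ?_
    field_simp
    ring
  have hint : ∀ R : ℝ, ∫ x in -R..R, ε / (x ^ 2 + ε ^ 2) = 2 * Real.arctan (R / ε) := by
    intro R
    rw [integral_eq_sub_of_hasDerivAt (fun x _ => hderiv x)
      (Continuous.intervalIntegrable (by fun_prop (disch := intro x; positivity)) _ _),
      neg_div, Real.arctan_neg]
    ring
  simp_rw [hint]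
  have h : Tendsto (fun R : ℝ => Real.arctan (R / ε)) atTop (𝓝 (Real.pi / 2)) :=
    (Real.tendsto_arctan_atTop.mono_right nhdsWithin_le_nhds).comp
      (tendsto_id.atTop_div_const hε)
  simpa [mul_div_cancel₀] using h.const_mul 2

section UpperHalfPlane

variable {E : Type*} [NormedAddCommGroup E] [NormedSpace ℂ E]

theorem integral_eq_rect_sides_of_differentiableOn [CompleteSpace E] (f : ℂ → E) (R H : ℝ)
    (hf : DifferentiableOn ℂ f ([[-R, R]] ×ℂ [[0, H]])) :
    ∫ x : ℝ in -R..R, f x =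
      (∫ x : ℝ in -R..R, f (x + H * I)) - I • (∫ y : ℝ in 0..H, f (R + y * I)) +
        I • ∫ y : ℝ in 0..H, f (-R + y * I) := by
  have h := integral_boundary_rect_eq_zero_of_differentiableOn f (-R) (R + H * I)
    (by simpa using hf)
  simp only [neg_re, ofReal_re, neg_im, ofReal_im, neg_zero, add_re, mul_re, I_re, I_im,
    add_im, mul_im, ofReal_zero, zero_mul, add_zero, mul_zero, sub_zero, mul_one, zero_add] at h
  rw [← sub_eq_zero, ← h]
  push_cast
  abel

theorem norm_integral_rect_top_le {f : ℂ → E} {t A B R : ℝ} (hR : 0 < R)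
    (hf : ∀ z : ℂ, 0 ≤ z.im → R ≤ ‖z‖ → ‖f z‖ ≤ (A * Real.exp (-(t * z.im)) + B / R) / R) :
    ‖∫ x : ℝ in -R..R, f (x + R * I)‖ ≤ 2 * (A * Real.exp (-(t * R)) + B / R) := by
  have hbound := norm_integral_le_of_norm_le_const (a := -R) (b := R)
    (f := fun x : ℝ => f (x + R * I)) fun x _ => by
      have him : (x + R * I : ℂ).im = R := by simp
      have hnorm : R ≤ ‖(x + R * I : ℂ)‖ := by
        simpa [him, abs_of_pos hR] using abs_im_le_norm (x + R * I : ℂ)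
      have hz := hf (x + R * I) (by rw [him]; exact hR.le) hnorm
      rwa [him] at hz
  rw [sub_neg_eq_add, abs_of_pos (by linarith)] at hbound
  convert hbound using 1
  field_simp
  ring

theorem norm_integral_rect_vertical_side_le {f : ℂ → E} {t A B R a : ℝ} (ht : 0 < t)
    (hA : 0 ≤ A) (hR : 0 < R) (ha : R ≤ |a|)
    (hf : ∀ z : ℂ, 0 ≤ z.im → R ≤ ‖z‖ → ‖f z‖ ≤ (A * Real.exp (-(t * z.im)) + B / R) / R) :
    ‖∫ y : ℝ in 0..R, f (a + y * I)‖ ≤ (A / t + B) / R := by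
  have hexp : IntervalIntegrable (fun y : ℝ => A * Real.exp (-(t * y))) volume 0 R :=
    Continuous.intervalIntegrable (by fun_prop) _ _
  refine (norm_integral_le_of_norm_le hR.le (ae_of_all _ fun y hy => ?_)
    ((hexp.add (intervalIntegrable_const (c := B / R))).div_const R)).trans ?_
  · have him : (a + y * I : ℂ).im = y := by simp
    have hre : (a + y * I : ℂ).re = a := by simp
    have hnorm : R ≤ ‖(a + y * I : ℂ)‖ := by
      have := abs_re_le_norm (a + y * I : ℂ)
      rw [hre] at this
      exact ha.trans this
    have hz := hf (a + y * I) (by rw [him]; exact hy.1.le) hnorm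
    rwa [him] at hz
  · rw [intervalIntegral.integral_div, integral_add hexp intervalIntegrable_const,
      intervalIntegral.integral_const_mul, intervalIntegral.integral_const, sub_zero, smul_eq_mul,
      mul_div_cancel₀ _ hR.ne']
    gcongr
    calc A * ∫ y in 0..R, Real.exp (-(t * y)) ≤ A * t⁻¹ :=
          mul_le_mul_of_nonneg_left (integral_exp_neg_mul_le_inv ht R) hA
      _ = A / t := (div_eq_mul_inv A t).symm

theorem tendsto_integral_zero_of_differentiableOn_upperHalfPlane [CompleteSpace E] {f : ℂ → E}
    {t A B R₀ : ℝ} (ht : 0 < t) (hA : 0 ≤ A) (hB : 0 ≤ B)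
    (hf : DifferentiableOn ℂ f {z | 0 ≤ z.im})
    (hbound : ∀ z : ℂ, 0 ≤ z.im → R₀ ≤ ‖z‖ →
      ‖f z‖ ≤ (A * Real.exp (-(t * z.im)) + B / ‖z‖) / ‖z‖) :
    Tendsto (fun R : ℝ => ∫ x : ℝ in -R..R, f x) atTop (𝓝 0) := by
  have hedges : ∀ R, max R₀ 1 ≤ R →
      ‖∫ x : ℝ in -R..R, f x‖ ≤
        2 * (A * Real.exp (-(t * R)) + B / R) + 2 * ((A / t + B) / R) := by
    intro R hR
    have hR0 : 0 < R := by linarith [le_max_right R₀ 1]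
    have hf' : ∀ z : ℂ, 0 ≤ z.im → R ≤ ‖z‖ →
        ‖f z‖ ≤ (A * Real.exp (-(t * z.im)) + B / R) / R := fun z hz hRz =>
      (hbound z hz ((le_max_left R₀ 1).trans (hR.trans hRz))).trans (by gcongr)
    have hrect : [[-R, R]] ×ℂ [[0, R]] ⊆ {z | 0 ≤ z.im} := fun z hz => by
      have him := (mem_reProdIm.mp hz).2
      rw [uIcc_of_le hR0.le] at him
      exact him.1
    rw [integral_eq_rect_sides_of_differentiableOn f R R (hf.mono hrect)]
    have htop := norm_integral_rect_top_le hR0 hf'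
    have hright := norm_integral_rect_vertical_side_le (a := R) ht hA hR0 (abs_of_pos hR0).ge hf'
    have hleft := norm_integral_rect_vertical_side_le (a := -R) ht hA hR0
      (by rw [abs_neg, abs_of_pos hR0]) hf'
    push_cast at hleft
    calc _ ≤ ‖∫ x : ℝ in -R..R, f (x + R * I)‖ + ‖I • ∫ y : ℝ in 0..R, f (R + y * I)‖ +
          ‖I • ∫ y : ℝ in 0..R, f (-R + y * I)‖ :=
          (norm_add_le _ _).trans (by gcongr; exact norm_sub_le _ _)
      _ ≤ _ := by rw [norm_smul, norm_smul, norm_I, one_mul, one_mul]; linarith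
  refine squeeze_zero_norm' (eventually_atTop.mpr ⟨_, hedges⟩) ?_
  have hexp : Tendsto (fun R : ℝ => Real.exp (-(t * R))) atTop (𝓝 0) :=
    Real.tendsto_exp_atBot.comp (tendsto_neg_atTop_atBot.comp (tendsto_id.const_mul_atTop ht))
  have hinv : ∀ C : ℝ, Tendsto (fun R : ℝ => C / R) atTop (𝓝 0) := fun C =>
    tendsto_const_nhds.div_atTop tendsto_id
  simpa using (((hexp.const_mul A).add (hinv B)).const_mul 2).add ((hinv (A / t + B)).const_mul 2)

end UpperHalfPlane

/-- `(z e^{izt} - iε e^{-εt}) / (z² + ε²)`, written through `dslope` so that its removable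
singularity at `iε` is filled in. -/
noncomputable def regularizedIntegrand (t ε : ℝ) (z : ℂ) : ℂ :=
  dslope (fun w : ℂ => w * exp (I * w * t)) (ε * I) z / (z + ε * I)

theorem regularizedIntegrand_of_ne {t ε : ℝ} {z : ℂ} (hz : z ≠ ε * I) :
    regularizedIntegrand t ε z =
      (z * exp (I * z * t) - ε * I * exp (-ε * t)) / (z ^ 2 + ε ^ 2) := by
  rw [regularizedIntegrand, dslope_of_ne _ hz, slope_def_field, div_div]
  congr 2
  · ring_nf
    rw [I_sq]
    ring_nf
  · linear_combination -(ε : ℂ) ^ 2 * I_sq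

theorem differentiableOn_regularizedIntegrand (t : ℝ) {ε : ℝ} (hε : 0 < ε) :
    DifferentiableOn ℂ (regularizedIntegrand t ε) {z | 0 ≤ z.im} := by
  have hdslope : Differentiable ℂ (dslope (fun w : ℂ => w * exp (I * w * t)) (ε * I)) := by
    rw [← differentiableOn_univ]
    exact (Complex.differentiableOn_dslope univ_mem).mpr (by fun_prop)
  refine hdslope.differentiableOn.div (by fun_prop) fun z hz h => ?_
  have := congrArg im h
  simp only [add_im, mul_im, ofReal_re, I_im, ofReal_im, I_re, zero_im] at this
  have hz' : 0 ≤ z.im := hz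
  linarith

theorem norm_regularizedIntegrand_le {t ε : ℝ} (ht : 0 ≤ t) (hε : 0 < ε) {z : ℂ}
    (hz : 0 ≤ z.im) (hzε : 2 * ε ≤ ‖z‖) :
    ‖regularizedIntegrand t ε z‖ ≤ (2 * Real.exp (-(t * z.im)) + 2 * ε / ‖z‖) / ‖z‖ := by
  have hne : z ≠ ε * I := by
    rintro rfl
    simp only [Complex.norm_mul, norm_real, Real.norm_eq_abs, abs_of_pos hε, norm_I, mul_one]
      at hzε
    linarith
  have hz0 : 0 < ‖z‖ := by linarith
  have hnum :
      ‖z * exp (I * z * t) - ε * I * exp (-ε * t)‖ ≤ ‖z‖ * Real.exp (-(t * z.im)) + ε := by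
    refine (norm_sub_le _ _).trans (add_le_add (le_of_eq ?_) ?_)
    · rw [norm_mul, norm_exp]
      congr 2
      simp only [mul_re, I_re, zero_mul, I_im, one_mul, zero_sub, ofReal_re, neg_mul, mul_im,
        zero_add, ofReal_im, mul_zero, sub_zero, neg_inj]
      ring
    · rw [norm_mul, norm_mul, norm_exp, norm_I, Complex.norm_of_nonneg hε.le, mul_one]
      refine mul_le_of_le_one_right hε.le (Real.exp_le_one_iff.mpr ?_)
      simpa using mul_nonneg hε.le ht
  have hden : ‖z‖ ^ 2 / 2 ≤ ‖z ^ 2 + ε ^ 2‖ := by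
    have := norm_sub_norm_le (z ^ 2) (-(ε ^ 2 : ℂ))
    rw [sub_neg_eq_add, norm_neg, norm_pow, norm_pow, Complex.norm_real,
      Real.norm_of_nonneg hε.le] at this
    nlinarith
  rw [regularizedIntegrand_of_ne hne, norm_div]
  calc _ ≤ (‖z‖ * Real.exp (-(t * z.im)) + ε) / (‖z‖ ^ 2 / 2) := by
        gcongr
    _ = _ := by field_simp

theorem ofReal_mul_exp_div_eq_regularizedIntegrand_add {ε : ℝ} (hε : 0 < ε) (t x : ℝ) :
    (x : ℂ) * exp (I * x * t) / ((x : ℂ) ^ 2 + (ε : ℂ) ^ 2) =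
      regularizedIntegrand t ε x + (ε / (x ^ 2 + ε ^ 2) : ℝ) * (I * exp (-ε * t)) := by
  have hne : (x : ℂ) ≠ ε * I := fun h => by simpa [hε.ne] using congrArg im h
  have hden : (x : ℂ) ^ 2 + (ε : ℂ) ^ 2 ≠ 0 := by
    exact_mod_cast (by positivity : x ^ 2 + ε ^ 2 ≠ 0)
  rw [regularizedIntegrand_of_ne hne]
  push_cast
  field_simp
  ring

/-- For every `t > 0` and `ε > 0`, the symmetric improper integral of
`x e^{ixt}/(x² + ε²)` over `ℝ` equals `iπ e^{−εt}`. -/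
theorem symmetric_integral_exp (t ε : ℝ) (ht : 0 < t) (hε : 0 < ε) :
    Tendsto
      (fun R : ℝ =>
        ∫ x in (-R)..R, (x : ℂ) * Complex.exp (Complex.I * x * t) / ((x : ℂ) ^ 2 + (ε : ℂ) ^ 2))
      atTop (nhds (Complex.I * Real.pi * Complex.exp (-(ε : ℂ) * t))) := by
  have hG := differentiableOn_regularizedIntegrand t hε
  have hGint : ∀ R : ℝ,
      IntervalIntegrable (fun x : ℝ => regularizedIntegrand t ε x) volume (-R) R := fun R =>
    (hG.continuousOn.comp_continuous continuous_ofReal fun x => by simp).intervalIntegrable _ _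
  have hsplit : ∀ R : ℝ,
      ∫ x in (-R)..R, (x : ℂ) * Complex.exp (Complex.I * x * t) / ((x : ℂ) ^ 2 + (ε : ℂ) ^ 2) =
        (∫ x in (-R)..R, regularizedIntegrand t ε x) +
          (∫ x in (-R)..R, ε / (x ^ 2 + ε ^ 2) : ℝ) * (I * exp (-ε * t)) := fun R => by
    rw [integral_congr fun x _ => ofReal_mul_exp_div_eq_regularizedIntegrand_add hε t x,
      integral_add (hGint R) ((Continuous.intervalIntegrable
        (by fun_prop (disch := intro x; positivity)) _ _).mul_const _),
      intervalIntegral.integral_mul_const, intervalIntegral.integral_ofReal]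
  have hregular := tendsto_integral_zero_of_differentiableOn_upperHalfPlane ht zero_le_two
    (by positivity) hG fun z hz hzε => norm_regularizedIntegrand_le ht.le hε hz hzε
  have hpoisson := (continuous_ofReal.tendsto _).comp (tendsto_integral_poisson_kernel hε)
  simp_rw [hsplit]
  rw [show I * Real.pi * exp (-ε * t) = 0 + Real.pi * (I * exp (-ε * t)) by ring]
  exact hregular.add (hpoisson.mul_const _)
end

section
/- Let c < 0 be a real number and let s = √c denote the principal complex square root of c (so s = i√|c|). Define ψ₂ : (0,∞) → ℂ by ψ₂(y) = −y/(2s) + ((y² − c)/(4c)) · Log((y + s)/(y − s)), where Log is the principal branch of the complex logarithm (the argument (y + s)/(y − s) never lies on the nonpositive real axis for y > 0). Then ψ₂ is twice differentiable on (0,∞) and satisfies (y² − c) ψ₂''(y) = 2 ψ₂(y) for all y > 0; that is, ψ₂ solves the Rayleigh equation with α = 0 for the profile U_s(y) = y². -/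
/-!
Where the principal logarithm is holomorphic, `d/dz Log((z+s)/(z-s)) = -2s/(z² - s²)`. With
`s² = c` this gives `ψ₂' = -1/s + z/(2c) Log((z+s)/(z-s))` and
`ψ₂'' = Log((z+s)/(z-s))/(2c) - zs/(c(z² - c))`, so `(z² - c) ψ₂'' - 2ψ₂ = z/s - zs/c = 0`.
For real `y > 0` and `s = i√|c|` the quotient `(y+s)/(y-s)` has positive imaginary part, so the
real derivatives of `y ↦ ψ₂(y)` are those of the complex function.
-/

open Complex Topology

noncomputable def parabolaRayleighSol (c s z : ℂ) : ℂ :=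
  -z / (2 * s) + (z ^ 2 - c) / (4 * c) * log ((z + s) / (z - s))

noncomputable def parabolaRayleighSolDeriv (c s z : ℂ) : ℂ :=
  -1 / s + z / (2 * c) * log ((z + s) / (z - s))

noncomputable def parabolaRayleighSolDeriv2 (c s z : ℂ) : ℂ :=
  log ((z + s) / (z - s)) / (2 * c) - z * s / (c * (z ^ 2 - c))

section

variable {c s z : ℂ}

lemma add_ne_zero_of_div_mem_slitPlane (h : (z + s) / (z - s) ∈ slitPlane) : z + s ≠ 0 :=
  left_ne_zero_of_mul (slitPlane_ne_zero h)

lemma hasDerivAt_log_add_div_sub (hz : z - s ≠ 0) (hslit : (z + s) / (z - s) ∈ slitPlane) :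
    HasDerivAt (fun w => log ((w + s) / (w - s))) (-2 * s / ((z - s) * (z + s))) z := by
  have hq : HasDerivAt (fun w => (w + s) / (w - s)) ((1 * (z - s) - (z + s) * 1) / (z - s) ^ 2) z :=
    ((hasDerivAt_id z).add_const s).div ((hasDerivAt_id z).sub_const s) hz
  have := add_ne_zero_of_div_mem_slitPlane hslit
  refine ((hasDerivAt_log hslit).comp z hq).congr_deriv ?_
  field_simp
  ring

variable (hc : c ≠ 0) (hs : s ^ 2 = c) (hz : z - s ≠ 0)
  (hslit : (z + s) / (z - s) ∈ slitPlane)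
include hs hz hslit

lemma sq_sub_ne_zero_of_div_mem_slitPlane : z ^ 2 - c ≠ 0 := by
  rw [← hs, sq_sub_sq]
  exact mul_ne_zero (add_ne_zero_of_div_mem_slitPlane hslit) hz

include hc

lemma hasDerivAt_parabolaRayleighSol :
    HasDerivAt (parabolaRayleighSol c s) (parabolaRayleighSolDeriv c s z) z := by
  have := add_ne_zero_of_div_mem_slitPlane hslit
  have hlin : HasDerivAt (fun w : ℂ => -w / (2 * s)) (-1 / (2 * s)) z := by
    simpa using (hasDerivAt_id z).neg.div_const (2 * s)
  have hquad : HasDerivAt (fun w : ℂ => (w ^ 2 - c) / (4 * c)) (2 * z / (4 * c)) z := by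
    simpa using ((hasDerivAt_pow 2 z).sub_const c).div_const (4 * c)
  refine (hlin.add (hquad.mul (hasDerivAt_log_add_div_sub hz hslit))).congr_deriv ?_
  unfold parabolaRayleighSolDeriv
  subst hs
  field_simp
  ring

lemma hasDerivAt_parabolaRayleighSolDeriv :
    HasDerivAt (parabolaRayleighSolDeriv c s) (parabolaRayleighSolDeriv2 c s z) z := by
  have := add_ne_zero_of_div_mem_slitPlane hslit
  have := sq_sub_ne_zero_of_div_mem_slitPlane hs hz hslit
  have hlin : HasDerivAt (fun w : ℂ => w / (2 * c)) (1 / (2 * c)) z := by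
    simpa using (hasDerivAt_id z).div_const (2 * c)
  refine ((hlin.mul (hasDerivAt_log_add_div_sub hz hslit)).const_add (-1 / s)).congr_deriv ?_
  unfold parabolaRayleighSolDeriv2
  subst hs
  field_simp
  ring

omit hz hslit in
lemma parabolaRayleighSol_ode (hz : z ^ 2 - c ≠ 0) :
    (z ^ 2 - c) * parabolaRayleighSolDeriv2 c s z = 2 * parabolaRayleighSol c s z := by
  unfold parabolaRayleighSol parabolaRayleighSolDeriv2
  subst hs
  field_simp
  ring

end

section

variable {a t : ℝ}

lemma ofReal_sub_I_mul_ne_zero (ht : 0 < t) : (t : ℂ) - I * a ≠ 0 := by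
  intro h
  simpa [ht.ne'] using congrArg re h

lemma ofReal_add_I_mul_div_mem_slitPlane (ha : 0 < a) (ht : 0 < t) :
    ((t : ℂ) + I * a) / ((t : ℂ) - I * a) ∈ slitPlane := by
  refine mem_slitPlane_iff.2 (Or.inr (ne_of_gt ?_))
  have : 0 < normSq ((t : ℂ) - I * a) := normSq_pos.2 (ofReal_sub_I_mul_ne_zero ht)
  simp only [div_im, add_re, add_im, sub_re, sub_im, mul_re, mul_im, I_re, I_im, ofReal_re,
    ofReal_im]
  ring_nf
  positivity

end

lemma parabolaRayleighSol_ofReal {c a : ℝ} (hc : c ≠ 0) (hs : (I * a) ^ 2 = c) (ha : 0 < a)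
    {y : ℝ} (hy : 0 < y) :
    DifferentiableAt ℝ (fun t : ℝ => parabolaRayleighSol c (I * a) t) y ∧
      DifferentiableAt ℝ (deriv fun t : ℝ => parabolaRayleighSol c (I * a) t) y ∧
      ((y : ℂ) ^ 2 - c) * deriv (deriv fun t : ℝ => parabolaRayleighSol c (I * a) t) y
        = 2 * parabolaRayleighSol c (I * a) y := by
  have hc' : (c : ℂ) ≠ 0 := ofReal_ne_zero.2 hc
  have hsol (t : ℝ) (ht : 0 < t) := (hasDerivAt_parabolaRayleighSol hc' hs
    (ofReal_sub_I_mul_ne_zero ht) (ofReal_add_I_mul_div_mem_slitPlane ha ht)).comp_ofReal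
  have hz := ofReal_sub_I_mul_ne_zero (a := a) hy
  have hslit := ofReal_add_I_mul_div_mem_slitPlane ha hy
  have hderiv := (hasDerivAt_parabolaRayleighSolDeriv hc' hs hz hslit).comp_ofReal
  have heq : deriv (fun t : ℝ => parabolaRayleighSol c (I * a) t)
      =ᶠ[𝓝 y] fun t : ℝ => parabolaRayleighSolDeriv c (I * a) t := by
    filter_upwards [Ioi_mem_nhds hy] with t ht using (hsol t ht).deriv
  refine ⟨(hsol y hy).differentiableAt, hderiv.differentiableAt.congr_of_eventuallyEq heq, ?_⟩
  rw [heq.deriv_eq, hderiv.deriv]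
  exact parabolaRayleighSol_ode hc' hs (sq_sub_ne_zero_of_div_mem_slitPlane hs hz hslit)

/-- For real `c < 0` and `s = √c = i√|c|` the principal square root, the explicit function
`ψ₂(y) = −y/(2s) + ((y² − c)/(4c)) Log((y+s)/(y−s))` is twice differentiable on `(0,∞)` and
solves `(y² − c) ψ₂'' = 2 ψ₂`, i.e. the Rayleigh equation with `α = 0` for `U_s(y) = y²`. -/
theorem rayleigh_explicit_parabola (c : ℝ) (hc : c < 0) :
    ∀ y : ℝ, 0 < y →
      DifferentiableAt ℝ
        (fun y : ℝ =>
          -(y : ℂ) / (2 * (Complex.I * (Real.sqrt (-c) : ℂ)))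
            + (((y : ℂ) ^ 2 - (c : ℂ)) / (4 * (c : ℂ)))
              * Complex.log (((y : ℂ) + Complex.I * (Real.sqrt (-c) : ℂ))
                  / ((y : ℂ) - Complex.I * (Real.sqrt (-c) : ℂ)))) y ∧
      DifferentiableAt ℝ
        (deriv (fun y : ℝ =>
          -(y : ℂ) / (2 * (Complex.I * (Real.sqrt (-c) : ℂ)))
            + (((y : ℂ) ^ 2 - (c : ℂ)) / (4 * (c : ℂ)))
              * Complex.log (((y : ℂ) + Complex.I * (Real.sqrt (-c) : ℂ))
                  / ((y : ℂ) - Complex.I * (Real.sqrt (-c) : ℂ))))) y ∧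
      ((y : ℂ) ^ 2 - (c : ℂ)) *
          deriv (deriv (fun y : ℝ =>
            -(y : ℂ) / (2 * (Complex.I * (Real.sqrt (-c) : ℂ)))
              + (((y : ℂ) ^ 2 - (c : ℂ)) / (4 * (c : ℂ)))
                * Complex.log (((y : ℂ) + Complex.I * (Real.sqrt (-c) : ℂ))
                    / ((y : ℂ) - Complex.I * (Real.sqrt (-c) : ℂ))))) y
        = 2 * (-(y : ℂ) / (2 * (Complex.I * (Real.sqrt (-c) : ℂ)))
            + (((y : ℂ) ^ 2 - (c : ℂ)) / (4 * (c : ℂ)))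
              * Complex.log (((y : ℂ) + Complex.I * (Real.sqrt (-c) : ℂ))
                  / ((y : ℂ) - Complex.I * (Real.sqrt (-c) : ℂ)))) := by
  intro y hy
  have ha : 0 < √(-c) := Real.sqrt_pos.2 (neg_pos.2 hc)
  have hs : (I * (√(-c) : ℝ)) ^ 2 = (c : ℂ) := by
    rw [mul_pow, I_sq, ← ofReal_pow, Real.sq_sqrt (neg_nonneg.2 hc.le)]
    push_cast
    ring
  exact parabolaRayleighSol_ofReal hc.ne hs ha hy
end

section
/- Let c < 0 be a real number, let s = √c be the principal complex square root of c, and define ψ₂ : (0,∞) → ℂ by ψ₂(y) = −y/(2s) + ((y² − c)/(4c)) · Log((y + s)/(y − s)), with Log the principal complex logarithm. Then lim_{y→+∞} y · ψ₂(y) = −s/3; in particular ψ₂(y) behaves like −1/(3z) as y → +∞, where z = y/√c. -/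
/-!
Write `s = i a` with `a = √(-c)` and put `t = a / y`. The logarithm is `2 i arctan t`, and then
`y ψ₂(y) = -(i a / 2) · ((1 + t²) arctan t - t) / t³`. By L'Hôpital's rule this quotient tends
to `2/3` as `t → 0`, the ratio of derivatives being `(2/3) · arctan t / t`.
-/

open Filter Topology

theorem Real.tendsto_arctan_div_self : Tendsto (fun t => arctan t / t) (𝓝[≠] 0) (𝓝 1) := by
  simpa [div_eq_inv_mul] using (hasDerivAt_arctan 0).tendsto_slope_zero

theorem Real.hasDerivAt_one_add_sq_mul_arctan_sub (t : ℝ) :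
    HasDerivAt (fun t => (1 + t ^ 2) * arctan t - t) (2 * t * arctan t) t := by
  have h : 1 + t ^ 2 ≠ 0 := by positivity
  refine (((hasDerivAt_pow 2 t).const_add 1).fun_mul (hasDerivAt_arctan t)).fun_sub
    (hasDerivAt_id' t) |>.congr_deriv ?_
  field_simp
  ring

theorem Real.tendsto_one_add_sq_mul_arctan_sub_div_cube :
    Tendsto (fun t => ((1 + t ^ 2) * arctan t - t) / t ^ 3) (𝓝[≠] 0) (𝓝 (2 / 3)) := by
  refine HasDerivAt.lhopital_zero_nhdsNE (.of_forall hasDerivAt_one_add_sq_mul_arctan_sub)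
    (.of_forall fun t => hasDerivAt_pow 3 t) ?_ ?_ ?_ ?_
  · filter_upwards [self_mem_nhdsWithin] with t (ht : t ≠ 0)
    positivity
  · exact tendsto_nhdsWithin_of_tendsto_nhds
      (by simpa using (hasDerivAt_one_add_sq_mul_arctan_sub 0).continuousAt.tendsto)
  · exact tendsto_nhdsWithin_of_tendsto_nhds (by simpa using (continuous_pow 3).tendsto (0 : ℝ))
  · refine (mul_one (2 / 3 : ℝ) ▸ tendsto_arctan_div_self.const_mul (2 / 3)).congr' ?_
    filter_upwards [self_mem_nhdsWithin] with t (ht : t ≠ 0)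
    field_simp
    ring

theorem Complex.log_one_add_mul_I_div_one_sub_mul_I (x : ℝ) :
    log ((1 + x * I) / (1 - x * I)) = 2 * I * Real.arctan x := by
  rw [ofReal_arctan, arctan, ← mul_assoc]
  ring_nf
  rw [I_sq]
  ring

theorem Complex.log_add_I_mul_div_sub_I_mul {y : ℝ} (hy : y ≠ 0) (a : ℝ) :
    log ((y + I * a) / (y - I * a)) = 2 * I * Real.arctan (a / y) := by
  have hyC : (y : ℂ) ≠ 0 := by exact_mod_cast hy
  have hnum : (y : ℂ) + I * a = y * (1 + (a / y : ℝ) * I) := by push_cast; field_simp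
  have hden : (y : ℂ) - I * a = y * (1 - (a / y : ℝ) * I) := by push_cast; field_simp
  rw [hnum, hden, mul_div_mul_left _ _ hyC, log_one_add_mul_I_div_one_sub_mul_I]

theorem Complex.mul_psi_two_eq_arctan {a y : ℝ} (ha : a ≠ 0) (hy : y ≠ 0) :
    (y : ℂ) * (-(y : ℂ) / (2 * (I * a)) + ((y ^ 2 - -(a : ℂ) ^ 2) / (4 * -(a : ℂ) ^ 2))
      * (2 * I * Real.arctan (a / y))) =
      -(I * a / 2) * (((1 + (a / y) ^ 2) * Real.arctan (a / y) - a / y) / (a / y) ^ 3 : ℝ) := by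
  have haC : (a : ℂ) ≠ 0 := by exact_mod_cast ha
  have hyC : (y : ℂ) ≠ 0 := by exact_mod_cast hy
  push_cast
  field_simp
  ring_nf
  rw [I_sq]
  ring

/-- For real `c < 0`, `s = √c = i√|c|`, and
`ψ₂(y) = −y/(2s) + ((y² − c)/(4c)) Log((y+s)/(y−s))`, one has
`lim_{y→+∞} y ψ₂(y) = −s/3`; i.e. `ψ₂(y) ∼ −1/(3z)` with `z = y/√c` as `y → +∞`. -/
theorem rayleigh_explicit_parabola_asymptotics (c : ℝ) (hc : c < 0) :
    Tendsto
      (fun y : ℝ =>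
        (y : ℂ) *
          (-(y : ℂ) / (2 * (Complex.I * (Real.sqrt (-c) : ℂ)))
            + (((y : ℂ) ^ 2 - (c : ℂ)) / (4 * (c : ℂ)))
              * Complex.log (((y : ℂ) + Complex.I * (Real.sqrt (-c) : ℂ))
                  / ((y : ℂ) - Complex.I * (Real.sqrt (-c) : ℂ)))))
      atTop (nhds (-(Complex.I * (Real.sqrt (-c) : ℂ)) / 3)) := by
  set a := Real.sqrt (-c)
  have ha : 0 < a := Real.sqrt_pos.mpr (neg_pos.mpr hc)
  have hca : (c : ℂ) = -(a : ℂ) ^ 2 := by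
    rw [← Complex.ofReal_pow, Real.sq_sqrt (neg_nonneg.mpr hc.le)]
    push_cast
    ring
  have ht : Tendsto (fun y : ℝ => a / y) atTop (𝓝[≠] 0) := by
    refine tendsto_nhdsWithin_iff.mpr ⟨tendsto_const_nhds.div_atTop tendsto_id, ?_⟩
    filter_upwards [eventually_gt_atTop 0] with y hy using (div_pos ha hy).ne'
  have hlim := (Complex.continuous_ofReal.tendsto _).comp
    (Real.tendsto_one_add_sq_mul_arctan_sub_div_cube.comp ht) |>.const_mul (-(Complex.I * a / 2))
  rw [show -(Complex.I * a / 2) * ((2 / 3 : ℝ) : ℂ) = -(Complex.I * a) / 3 by push_cast; ring]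
    at hlim
  refine hlim.congr' ?_
  filter_upwards [eventually_gt_atTop 0] with y hy
  rw [hca, Complex.log_add_I_mul_div_sub_I_mul hy.ne', Complex.mul_psi_two_eq_arctan ha.ne' hy.ne']
  rfl
end

section
/- Let α > 0, a ∈ ℝ, and let q : [a, ∞) → ℂ be continuous. Let ψ : [a, ∞) → ℂ be twice differentiable with ψ''(y) = q(y)ψ(y) for all y ≥ a, ψ(y) ≠ 0 for all y ≥ a, and ψ(y) e^{αy} → 1 as y → +∞. Fix y₀ ≥ a and define φ(y) = ψ(y) ∫_{y₀}^{y} ψ(x)^{−2} dx. Then φ is twice differentiable, φ''(y) = q(y)φ(y) for all y ≥ a, the Wronskian satisfies φ'(y)ψ(y) − φ(y)ψ'(y) = 1 for all y ≥ a, and φ(y) e^{−αy} → 1/(2α) as y → +∞; in particular |φ(y)| → +∞ and φ behaves like e^{+αy}. -/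
/-! With `J y = ∫ x in y₀..y, ψ x⁻²`, the product `φ = ψ J` has `φ' = ψ' J + ψ⁻¹`, and the two
terms `±ψ'ψ⁻²` cancel in `φ''`, leaving `φ'' = ψ'' J = q φ`; the Wronskian `φ'ψ - φψ' = 1` is then
pure algebra. For the growth, `ψ x⁻² = e^{2αx} + o(e^{2αx})` and integrating a function that is
`o(e^{2αx})` gives `o(e^{2αy})`, so `J y = e^{2αy} / (2α) + o(e^{2αy})`; multiplying by
`ψ y ~ e^{-αy}` yields `φ y ~ e^{αy} / (2α)`. -/

open Filter Set intervalIntegral Asymptotics Topology MeasureTheory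

section

variable {𝕜 𝕜' : Type*} [NontriviallyNormedField 𝕜] [NontriviallyNormedField 𝕜']
  [NormedAlgebra 𝕜 𝕜'] {ψ ψ' J : 𝕜 → 𝕜'} {d d' : 𝕜'} {s : Set 𝕜} {y : 𝕜}

theorem HasDerivWithinAt.mul_primitive_inv_sq (hψ : HasDerivWithinAt ψ d s y)
    (hJ : HasDerivWithinAt J (ψ y ^ 2)⁻¹ s y) (hy : ψ y ≠ 0) :
    HasDerivWithinAt (fun t => ψ t * J t) (d * J y + (ψ y)⁻¹) s y :=
  (hψ.fun_mul hJ).congr_deriv (by field_simp)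

theorem HasDerivWithinAt.deriv_mul_primitive_inv_sq (hψ : HasDerivWithinAt ψ (ψ' y) s y)
    (hψ' : HasDerivWithinAt ψ' d' s y) (hJ : HasDerivWithinAt J (ψ y ^ 2)⁻¹ s y) (hy : ψ y ≠ 0) :
    HasDerivWithinAt (fun t => ψ' t * J t + (ψ t)⁻¹) (d' * J y) s y :=
  ((hψ'.fun_mul hJ).fun_add (hψ.fun_inv hy)).congr_deriv (by ring)

end

section

variable {E : Type*} [NormedAddCommGroup E] [NormedSpace ℝ E]

theorem ContinuousOn.hasDerivWithinAt_integral_Ici [CompleteSpace E] {f : ℝ → E} {a y₀ y : ℝ}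
    (hf : ContinuousOn f (Ici a)) (hy₀ : a ≤ y₀) (hy : a ≤ y) :
    HasDerivWithinAt (fun t => ∫ x in y₀..t, f x) (f y) (Ici a) y := by
  set F : ℝ → E := fun x => f (max x a)
  have hF : Continuous F :=
    hf.comp_continuous (continuous_id.max continuous_const) fun x => le_max_right x a
  have hFf : EqOn F f (Ici a) := fun x hx => congrArg f (max_eq_left hx)
  have hint : EqOn (fun t => ∫ x in y₀..t, F x) (fun t => ∫ x in y₀..t, f x) (Ici a) :=
    fun t ht => integral_congr fun x hx => hFf (le_trans (le_min hy₀ ht) hx.1)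
  have hderiv := (hF.integral_hasStrictDerivAt y₀ y).hasDerivAt.hasDerivWithinAt (s := Ici a)
  rw [hFf hy] at hderiv
  exact hderiv.congr (fun t ht => (hint ht).symm) (hint hy).symm

theorem integral_exp_mul {c : ℝ} (hc : c ≠ 0) (a b : ℝ) :
    ∫ x in a..b, Real.exp (c * x) = (Real.exp (c * b) - Real.exp (c * a)) / c := by
  rw [integral_comp_mul_left (fun x => Real.exp x) hc, integral_exp, smul_eq_mul, inv_mul_eq_div]

theorem norm_integral_le_of_norm_le_mul_exp {f : ℝ → E} {c K T y : ℝ} (hc : 0 < c) (hK0 : 0 ≤ K)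
    (hTy : T ≤ y) (hK : ∀ x ∈ Ioc T y, ‖f x‖ ≤ K * Real.exp (c * x)) :
    ‖∫ x in T..y, f x‖ ≤ K / c * Real.exp (c * y) := by
  calc ‖∫ x in T..y, f x‖ ≤ ∫ x in T..y, K * Real.exp (c * x) :=
        norm_integral_le_of_norm_le hTy (ae_of_all _ hK)
          ((by fun_prop : Continuous _).intervalIntegrable _ _)
    _ = K / c * (Real.exp (c * y) - Real.exp (c * T)) := by
        rw [intervalIntegral.integral_const_mul, integral_exp_mul hc.ne']; ring
    _ ≤ K / c * Real.exp (c * y) := by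
        gcongr
        linarith [Real.exp_pos (c * T)]

theorem integral_isLittleO_exp_mul {f : ℝ → E} {c y₀ : ℝ} (hc : 0 < c)
    (hf : ∀ y ≥ y₀, IntervalIntegrable f volume y₀ y)
    (hfo : f =o[atTop] fun x => Real.exp (c * x)) :
    (fun y => ∫ x in y₀..y, f x) =o[atTop] fun y => Real.exp (c * y) := by
  have hexp : Tendsto (fun y => Real.exp (c * y)) atTop atTop :=
    Real.tendsto_exp_atTop.comp (tendsto_id.const_mul_atTop hc)
  refine isLittleO_iff.2 fun ε hε => ?_
  obtain ⟨T, hT⟩ := eventually_atTop.1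
    ((hfo.bound (by positivity : 0 < c * (ε / 2))).and (eventually_ge_atTop y₀))
  have hy₀T : y₀ ≤ T := (hT T le_rfl).2
  have hhead : (fun _ : ℝ => ∫ x in y₀..T, f x) =o[atTop] fun y => Real.exp (c * y) :=
    isLittleO_const_left.2 (Or.inr (tendsto_norm_atTop_atTop.comp hexp))
  filter_upwards [hhead.bound (half_pos hε), eventually_ge_atTop T] with y hhead_y hTy
  have htail : ‖∫ x in T..y, f x‖ ≤ ε / 2 * ‖Real.exp (c * y)‖ :=
    calc ‖∫ x in T..y, f x‖ ≤ c * (ε / 2) / c * Real.exp (c * y) :=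
          norm_integral_le_of_norm_le_mul_exp hc (by positivity) hTy fun x hx => by
            simpa only [Real.norm_of_nonneg (Real.exp_pos _).le] using (hT x hx.1.le).1
      _ = ε / 2 * ‖Real.exp (c * y)‖ := by
          rw [Real.norm_of_nonneg (Real.exp_pos _).le, mul_div_cancel_left₀ _ hc.ne']
  have hTy_int : IntervalIntegrable f volume T y := (hf T hy₀T).symm.trans (hf y (hy₀T.trans hTy))
  rw [← integral_add_adjacent_intervals (hf T hy₀T) hTy_int]
  calc ‖(∫ x in y₀..T, f x) + ∫ x in T..y, f x‖
      ≤ ‖∫ x in y₀..T, f x‖ + ‖∫ x in T..y, f x‖ := norm_add_le _ _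
    _ ≤ ε / 2 * ‖Real.exp (c * y)‖ + ε / 2 * ‖Real.exp (c * y)‖ := add_le_add hhead_y htail
    _ = ε * ‖Real.exp (c * y)‖ := by ring

theorem tendsto_exp_neg_mul_smul_integral [CompleteSpace E] {f : ℝ → E} {c y₀ : ℝ} {L : E}
    (hc : 0 < c) (hf : ∀ y ≥ y₀, IntervalIntegrable f volume y₀ y)
    (hL : Tendsto (fun x => Real.exp (-(c * x)) • f x) atTop (𝓝 L)) :
    Tendsto (fun y => Real.exp (-(c * y)) • ∫ x in y₀..y, f x) atTop (𝓝 (c⁻¹ • L)) := by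
  have hexp_mul : ∀ x, Real.exp (c * x) * Real.exp (-(c * x)) = 1 := fun x => by
    rw [← Real.exp_add, add_neg_cancel, Real.exp_zero]
  have hexpL : Continuous fun x => Real.exp (c * x) • L := by fun_prop
  set g : ℝ → E := fun x => f x - Real.exp (c * x) • L
  have hgo : g =o[atTop] fun x => Real.exp (c * x) := by
    have h0 : (fun x => Real.exp (-(c * x)) • f x - L) =o[atTop] fun _ => (1 : ℝ) :=
      (isLittleO_one_iff ℝ).2 (by simpa using hL.sub_const L)
    refine ((isBigO_refl (fun x => Real.exp (c * x)) atTop).smul_isLittleO h0).congr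
      (fun x => ?_) (fun x => mul_one _)
    simp only [g, smul_sub, smul_smul, hexp_mul, one_smul]
  have hg : ∀ y ≥ y₀, IntervalIntegrable g volume y₀ y := fun y hy =>
    (hf y hy).sub (hexpL.intervalIntegrable _ _)
  have hsplit : ∀ y ≥ y₀, Real.exp (-(c * y)) • ∫ x in y₀..y, f x =
      Real.exp (-(c * y)) • (∫ x in y₀..y, g x) +
        (c⁻¹ * (1 - Real.exp (c * y₀) * Real.exp (-(c * y)))) • L := fun y hy => by
    rw [integral_sub (hf y hy) (hexpL.intervalIntegrable _ _), intervalIntegral.integral_smul_const,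
      integral_exp_mul hc.ne']
    match_scalars
    · ring
    · field_simp
      linear_combination hexp_mul y
  have hrem : Tendsto (fun y => Real.exp (-(c * y)) • ∫ x in y₀..y, g x) atTop (𝓝 0) := by
    have := (isBigO_refl (fun y => Real.exp (-(c * y))) atTop).smul_isLittleO
      (integral_isLittleO_exp_mul hc hg hgo)
    refine (isLittleO_one_iff ℝ).1 (this.congr_right fun y => ?_)
    rw [smul_eq_mul, mul_comm, hexp_mul]
  have hexp_decay : Tendsto (fun y => Real.exp (-(c * y))) atTop (𝓝 0) :=
    Real.tendsto_exp_atBot.comp (tendsto_neg_atTop_atBot.comp (tendsto_id.const_mul_atTop hc))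
  have hcoef : Tendsto (fun y => c⁻¹ * (1 - Real.exp (c * y₀) * Real.exp (-(c * y)))) atTop
      (𝓝 c⁻¹) := by
    simpa using ((hexp_decay.const_mul (Real.exp (c * y₀))).const_sub 1).const_mul c⁻¹
  simpa using (hrem.add (hcoef.smul_const L)).congr'
    ((eventually_ge_atTop y₀).mono fun y hy => (hsplit y hy).symm)

end

theorem tendsto_mul_integral_inv_sq_mul_exp_neg {ψ : ℝ → ℂ} {α y₀ : ℝ} (hα : 0 < α)
    (hψ : ∀ y ≥ y₀, IntervalIntegrable (fun x => (ψ x ^ 2)⁻¹) volume y₀ y)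
    (hdecay : Tendsto (fun y : ℝ => ψ y * Complex.exp (α * y)) atTop (𝓝 1)) :
    Tendsto (fun y : ℝ => (ψ y * ∫ x in y₀..y, (ψ x ^ 2)⁻¹) * Complex.exp (-α * y)) atTop
      (𝓝 (1 / (2 * α))) := by
  have hsq : Tendsto (fun x => Real.exp (-(2 * α * x)) • (ψ x ^ 2)⁻¹) atTop (𝓝 1) := by
    have := (hdecay.pow 2).inv₀ (by norm_num)
    rw [one_pow, inv_one] at this
    refine this.congr fun x => ?_
    rw [Complex.real_smul, Complex.ofReal_exp, mul_pow, mul_inv, ← Complex.exp_nat_mul,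
      ← Complex.exp_neg, mul_comm]
    push_cast
    ring_nf
  have hJ := tendsto_exp_neg_mul_smul_integral (by positivity : 0 < 2 * α) hψ hsq
  have hexp : ∀ y : ℝ, Complex.exp (α * y) * Real.exp (-(2 * α * y)) = Complex.exp (-α * y) :=
    fun y => by rw [Complex.ofReal_exp, ← Complex.exp_add]; push_cast; ring_nf
  convert hdecay.mul hJ using 2 with y
  · rw [Complex.real_smul, ← hexp]
    ring
  · simp

theorem growing_solution_reduction_of_order_general (α a : ℝ) (hα : 0 < α)
    (q : ℝ → ℂ)
    (ψ ψd ψdd : ℝ → ℂ)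
    (hψd : ∀ y ∈ Ici a, HasDerivWithinAt ψ (ψd y) (Ici a) y)
    (hψdd : ∀ y ∈ Ici a, HasDerivWithinAt ψd (ψdd y) (Ici a) y)
    (heq : ∀ y ∈ Ici a, ψdd y = q y * ψ y)
    (hne : ∀ y ∈ Ici a, ψ y ≠ 0)
    (hdecay : Tendsto (fun y : ℝ => ψ y * Complex.exp ((α : ℂ) * (y : ℂ))) atTop (nhds 1))
    (y₀ : ℝ) (hy₀ : a ≤ y₀) :
    ∃ φd φdd : ℝ → ℂ,
      (∀ y ∈ Ici a,
        HasDerivWithinAt (fun y : ℝ => ψ y * ∫ x in y₀..y, ((ψ x) ^ 2)⁻¹) (φd y) (Ici a) y) ∧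
      (∀ y ∈ Ici a, HasDerivWithinAt φd (φdd y) (Ici a) y) ∧
      (∀ y ∈ Ici a, φdd y = q y * (ψ y * ∫ x in y₀..y, ((ψ x) ^ 2)⁻¹)) ∧
      (∀ y ∈ Ici a,
        φd y * ψ y - (ψ y * ∫ x in y₀..y, ((ψ x) ^ 2)⁻¹) * ψd y = 1) ∧
      Tendsto
        (fun y : ℝ => (ψ y * ∫ x in y₀..y, ((ψ x) ^ 2)⁻¹) * Complex.exp (-(α : ℂ) * (y : ℂ)))
        atTop (nhds (1 / (2 * (α : ℂ)))) := by
  have hψ_cont : ContinuousOn ψ (Ici a) := fun y hy => (hψd y hy).continuousWithinAt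
  have hinv_sq : ContinuousOn (fun x => (ψ x ^ 2)⁻¹) (Ici a) :=
    (hψ_cont.pow 2).inv₀ fun y hy => pow_ne_zero 2 (hne y hy)
  have hJ : ∀ y ∈ Ici a,
      HasDerivWithinAt (fun t => ∫ x in y₀..t, (ψ x ^ 2)⁻¹) (ψ y ^ 2)⁻¹ (Ici a) y :=
    fun y hy => hinv_sq.hasDerivWithinAt_integral_Ici hy₀ hy
  refine ⟨fun y => ψd y * (∫ x in y₀..y, (ψ x ^ 2)⁻¹) + (ψ y)⁻¹,
    fun y => q y * (ψ y * ∫ x in y₀..y, (ψ x ^ 2)⁻¹),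
    fun y hy => (hψd y hy).mul_primitive_inv_sq (hJ y hy) (hne y hy),
    fun y hy => ((hψd y hy).deriv_mul_primitive_inv_sq (hψdd y hy) (hJ y hy)
      (hne y hy)).congr_deriv (by rw [heq y hy, mul_assoc]),
    fun _ _ => rfl, fun y hy => ?_, ?_⟩
  · field_simp [hne y hy]
    ring
  · refine tendsto_mul_integral_inv_sq_mul_exp_neg hα (fun y hy => ?_) hdecay
    exact (hinv_sq.mono fun x hx => (le_min hy₀ (hy₀.trans hy)).trans hx.1).intervalIntegrable

/-- Reduction of order: from a nonvanishing decaying solution `ψ` of `ψ'' = qψ` with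
`ψ(y)e^{αy} → 1`, the function `φ(y) = ψ(y) ∫_{y₀}^{y} ψ(x)⁻² dx` is a second solution with
Wronskian `φ'ψ − φψ' = 1`, and `φ(y) e^{−αy} → 1/(2α)` (so `|φ| → ∞`, `φ ∼ e^{+αy}`). -/
theorem growing_solution_reduction_of_order (α a : ℝ) (hα : 0 < α)
    (q : ℝ → ℂ) (hq : ContinuousOn q (Ici a))
    (ψ ψd ψdd : ℝ → ℂ)
    (hψd : ∀ y ∈ Ici a, HasDerivWithinAt ψ (ψd y) (Ici a) y)
    (hψdd : ∀ y ∈ Ici a, HasDerivWithinAt ψd (ψdd y) (Ici a) y)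
    (heq : ∀ y ∈ Ici a, ψdd y = q y * ψ y)
    (hne : ∀ y ∈ Ici a, ψ y ≠ 0)
    (hdecay : Tendsto (fun y : ℝ => ψ y * Complex.exp ((α : ℂ) * (y : ℂ))) atTop (nhds 1))
    (y₀ : ℝ) (hy₀ : a ≤ y₀) :
    ∃ φd φdd : ℝ → ℂ,
      (∀ y ∈ Ici a,
        HasDerivWithinAt (fun y : ℝ => ψ y * ∫ x in y₀..y, ((ψ x) ^ 2)⁻¹) (φd y) (Ici a) y) ∧
      (∀ y ∈ Ici a, HasDerivWithinAt φd (φdd y) (Ici a) y) ∧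
      (∀ y ∈ Ici a, φdd y = q y * (ψ y * ∫ x in y₀..y, ((ψ x) ^ 2)⁻¹)) ∧
      (∀ y ∈ Ici a,
        φd y * ψ y - (ψ y * ∫ x in y₀..y, ((ψ x) ^ 2)⁻¹) * ψd y = 1) ∧
      Tendsto
        (fun y : ℝ => (ψ y * ∫ x in y₀..y, ((ψ x) ^ 2)⁻¹) * Complex.exp (-(α : ℂ) * (y : ℂ)))
        atTop (nhds (1 / (2 * (α : ℂ)))) :=
  growing_solution_reduction_of_order_general α a hα q ψ ψd ψdd hψd hψdd heq hne hdecay y₀ hy₀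
end
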